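/- L² estimate of J applied to the power nonlinearity: let p ≥ 1 and t > 0. There is a constant C depending only on p such that for every continuously differentiable v : (0,∞) → ℂ with v, v', J_t v ∈ L²(ℝ⁺), the function f := |v|^{p−1} v satisfies ‖J_t f‖_{L²(ℝ⁺)} ≤ C t^{−(p−1)/2} ‖v‖_{L²(ℝ⁺)}^{(p−1)/2} ‖J_t v‖_{L²(ℝ⁺)}^{(p+1)/2}, and also ‖J_t f‖_{L²(ℝ⁺)} ≤ C ‖v‖_{L²(ℝ⁺)}^{(p−1)/2} ‖v'‖_{L²(ℝ⁺)}^{(p−1)/2} ‖J_t v‖_{L²(ℝ⁺)}. -/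

import Mathlib

open MeasureTheory Set

/-- The `L²` norm of a function on the half line `(0, ∞)`. -/
noncomputable def L2norm (φ : ℝ → ℂ) : ℝ :=
  Real.sqrt (∫ x in Set.Ioi (0:ℝ), ‖φ x‖ ^ 2)

/-- The dilation operator `(J_t φ)(x) = x φ(x) + i t φ'(x)`. -/
noncomputable def Jop (t : ℝ) (φ : ℝ → ℂ) : ℝ → ℂ :=
  fun x => (x : ℂ) * φ x + Complex.I * (t : ℂ) * deriv φ x

/-!
Conjugation by the chirp `M(x) = exp (i x² / 2t)` turns `J_t` into `i t ∂ₓ`: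
`J_t v = i t M ∂ₓ(M̄ v)`. The nonlinearity `G(z) = |z|^(p-1) z` commutes with multiplication by
unimodular numbers, so `J_t G(v) = i t M ∂ₓ G(M̄ v)`, and the chain rule bound
`|∂ₓ G(w)| ≤ p |w|^(p-1) |∂ₓ w|` gives `|J_t G(v)| ≤ p |v|^(p-1) |J_t v|` pointwise.
On the half line, `|u(x)|² = -∫_x^∞ (|u|²)'` gives `‖u‖_∞² ≤ 2 ‖u‖ ‖u'‖`; for `u = v` and for
`u = M̄ v`, whose derivative has modulus `|J_t v| / t`, this bounds `|v|^(p-1)` in the two ways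
required.
-/

open Filter Topology Asymptotics
open scoped InnerProductSpace

theorem integral_norm_mul_norm_le {α E : Type*} [MeasurableSpace α] {μ : Measure α}
    [NormedAddCommGroup E] {u w : α → E} (hu : MemLp u 2 μ) (hw : MemLp w 2 μ) :
    ∫ a, ‖u a‖ * ‖w a‖ ∂μ ≤ √(∫ a, ‖u a‖ ^ 2 ∂μ) * √(∫ a, ‖w a‖ ^ 2 ∂μ) := by
  simpa [Real.sqrt_eq_rpow] using integral_mul_norm_le_Lp_mul_Lq Real.HolderConjugate.two_two
    (by simpa using hu) (by simpa using hw)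

section InnerProductSpace

variable {E : Type*} [NormedAddCommGroup E] [InnerProductSpace ℝ E] {u u' : ℝ → E} {d : E}
  {a x : ℝ}

theorem sq_norm_le_of_hasDerivAt_Ioi (hd : ∀ y ∈ Ioi a, HasDerivAt u (u' y) y)
    (hu : MemLp u 2 (volume.restrict (Ioi a))) (hu' : MemLp u' 2 (volume.restrict (Ioi a)))
    (hx : a < x) :
    ‖u x‖ ^ 2 ≤ 2 * √(∫ y in Ioi a, ‖u y‖ ^ 2) * √(∫ y in Ioi a, ‖u' y‖ ^ 2) := by
  set F' : ℝ → ℝ := fun y => 2 * ⟪u y, u' y⟫_ℝ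
  have hF : ∀ y ∈ Ioi a, HasDerivAt (fun z => ‖u z‖ ^ 2) (F' y) y :=
    fun y hy => (hd y hy).norm_sq
  have hF'_le : ∀ y, ‖F' y‖ ≤ 2 * (‖u y‖ * ‖u' y‖) := fun y => by
    simpa [F', abs_mul] using
      mul_le_mul_of_nonneg_left (abs_real_inner_le_norm (u y) (u' y)) zero_le_two
  have hprod : IntegrableOn (fun y => 2 * (‖u y‖ * ‖u' y‖)) (Ioi a) :=
    (hu.norm.integrable_mul hu'.norm).const_mul 2
  have hF'int : IntegrableOn F' (Ioi a) :=
    hprod.mono' ((hu.1.inner hu'.1).const_mul 2) (.of_forall hF'_le)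
  have hFint : IntegrableOn (fun z => ‖u z‖ ^ 2) (Ioi a) :=
    (memLp_two_iff_integrable_sq_norm hu.1).1 hu
  -- `‖u‖²` is integrable with integrable derivative, hence tends to `0` at infinity.
  have hFx : ∫ y in Ioi x, F' y = 0 - ‖u x‖ ^ 2 :=
    integral_Ioi_of_hasDerivAt_of_tendsto' (fun y hy => hF y (hx.trans_le hy))
      (hF'int.mono_set (Ioi_subset_Ioi hx.le))
      (tendsto_zero_of_hasDerivAt_of_integrableOn_Ioi hF hF'int hFint)
  calc ‖u x‖ ^ 2 = -∫ y in Ioi x, F' y := by rw [hFx]; ring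
    _ ≤ ∫ y in Ioi x, ‖F' y‖ := (neg_le_abs _).trans
        (by simpa only [Real.norm_eq_abs] using norm_integral_le_integral_norm F')
    _ ≤ ∫ y in Ioi a, ‖F' y‖ :=
        setIntegral_mono_set hF'int.norm (.of_forall fun _ => norm_nonneg _)
          (Ioi_subset_Ioi hx.le).eventuallyLE
    _ ≤ ∫ y in Ioi a, 2 * (‖u y‖ * ‖u' y‖) := integral_mono hF'int.norm hprod hF'_le
    _ ≤ 2 * √(∫ y in Ioi a, ‖u y‖ ^ 2) * √(∫ y in Ioi a, ‖u' y‖ ^ 2) := by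
        rw [integral_const_mul, mul_assoc]
        exact mul_le_mul_of_nonneg_left (integral_norm_mul_norm_le hu hu') zero_le_two

theorem HasDerivAt.norm_rpow (hu : HasDerivAt u d x) (h0 : u x ≠ 0) (s : ℝ) :
    HasDerivAt (fun y => ‖u y‖ ^ s) (s * ‖u x‖ ^ (s - 2) * ⟪u x, d⟫_ℝ) x := by
  have hsq : ∀ y, (‖u y‖ ^ 2) ^ (s / 2) = ‖u y‖ ^ s := fun y => by
    rw [← Real.rpow_natCast, ← Real.rpow_mul (norm_nonneg _)]; ring_nf
  have h := hu.norm_sq.rpow_const (p := s / 2) (Or.inl (by positivity))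
  simp only [hsq] at h
  convert h using 1
  rw [← Real.rpow_natCast, ← Real.rpow_mul (norm_nonneg _)]
  ring_nf

theorem HasDerivAt.norm_rpow_smul_of_eq_zero {p : ℝ} (hp : 1 < p) (hu : HasDerivAt u d x)
    (h0 : u x = 0) : HasDerivAt (fun y => ‖u y‖ ^ (p - 1) • u y) 0 x := by
  have hsmall : (fun y => ‖u y‖ ^ (p - 1)) =o[𝓝 x] fun _ => (1 : ℝ) := by
    rw [isLittleO_one_iff]
    have := (Real.continuousAt_rpow_const _ (p - 1) (Or.inr (by linarith))).tendsto.comp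
      hu.continuousAt.norm
    simpa [Function.comp_def, h0, Real.zero_rpow (by linarith : p - 1 ≠ 0)] using this
  have hlin : u =O[𝓝 x] fun y => y - x := by simpa [h0] using hu.isBigO_sub
  rw [hasDerivAt_iff_isLittleO]
  simpa [h0] using hsmall.smul_isBigO hlin

theorem HasDerivAt.exists_norm_rpow_smul {p : ℝ} (hp : 1 ≤ p) (hu : HasDerivAt u d x) :
    ∃ D, HasDerivAt (fun y => ‖u y‖ ^ (p - 1) • u y) D x ∧ ‖D‖ ≤ p * ‖u x‖ ^ (p - 1) * ‖d‖ := by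
  rcases hp.eq_or_lt with rfl | hp
  · exact ⟨d, by simpa using hu, by simp⟩
  rcases eq_or_ne (u x) 0 with h0 | h0
  · exact ⟨0, hu.norm_rpow_smul_of_eq_zero hp h0, by rw [norm_zero]; positivity⟩
  refine ⟨_, (hu.norm_rpow h0 (p - 1)).smul hu, ?_⟩
  set r := ‖u x‖
  have hr : 0 < r := norm_pos_iff.2 h0
  have hpow : r ^ (p - 1 - 2) * r ^ 2 = r ^ (p - 1) := by
    rw [← Real.rpow_natCast, ← Real.rpow_add hr]; ring_nf
  have hinner : |⟪u x, d⟫_ℝ| ≤ r * ‖d‖ := abs_real_inner_le_norm _ _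
  calc ‖r ^ (p - 1) • d + ((p - 1) * r ^ (p - 1 - 2) * ⟪u x, d⟫_ℝ) • u x‖
      ≤ r ^ (p - 1) * ‖d‖ + (p - 1) * r ^ (p - 1 - 2) * |⟪u x, d⟫_ℝ| * r := by
        refine (norm_add_le _ _).trans_eq ?_
        rw [norm_smul, norm_smul, Real.norm_of_nonneg (by positivity), Real.norm_eq_abs,
          abs_mul, abs_of_nonneg (mul_nonneg (sub_nonneg.2 hp.le) (by positivity))]
    _ ≤ r ^ (p - 1) * ‖d‖ + (p - 1) * r ^ (p - 1 - 2) * (r * ‖d‖) * r := by gcongr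
    _ = p * r ^ (p - 1) * ‖d‖ := by rw [← hpow]; ring

end InnerProductSpace

theorem L2norm_nonneg (φ : ℝ → ℂ) : 0 ≤ L2norm φ :=
  Real.sqrt_nonneg _

theorem L2norm_eq_mul_of_norm_eq {φ ψ : ℝ → ℂ} {c : ℝ} (hc : 0 ≤ c)
    (h : ∀ x ∈ Ioi 0, ‖φ x‖ = c * ‖ψ x‖) : L2norm φ = c * L2norm ψ := by
  rw [L2norm, L2norm, setIntegral_congr_fun measurableSet_Ioi fun x hx => by rw [h x hx, mul_pow],
    integral_const_mul, Real.sqrt_mul (sq_nonneg c), Real.sqrt_sq hc]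

theorem L2norm_le_mul_of_norm_le {φ ψ : ℝ → ℂ} {c : ℝ} (hc : 0 ≤ c)
    (hψ : IntegrableOn (fun x => ‖ψ x‖ ^ 2) (Ioi 0)) (h : ∀ x ∈ Ioi 0, ‖φ x‖ ≤ c * ‖ψ x‖) :
    L2norm φ ≤ c * L2norm ψ := by
  have hint : ∫ x in Ioi 0, ‖φ x‖ ^ 2 ≤ ∫ x in Ioi 0, c ^ 2 * ‖ψ x‖ ^ 2 := by
    refine integral_mono_of_nonneg (.of_forall fun x => by positivity) (hψ.const_mul _) ?_
    refine (ae_restrict_iff' measurableSet_Ioi).2 (.of_forall fun x hx => ?_)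
    show ‖φ x‖ ^ 2 ≤ c ^ 2 * ‖ψ x‖ ^ 2
    rw [← mul_pow]
    exact pow_le_pow_left₀ (norm_nonneg _) (h x hx) 2
  rw [integral_const_mul] at hint
  rw [L2norm, L2norm, ← Real.sqrt_sq hc, ← Real.sqrt_mul (sq_nonneg c)]
  exact Real.sqrt_le_sqrt hint

noncomputable def chirp (t x : ℝ) : ℂ :=
  Complex.exp (((x ^ 2 / (2 * t) : ℝ) : ℂ) * Complex.I)

theorem norm_chirp (t x : ℝ) : ‖chirp t x‖ = 1 :=
  Complex.norm_exp_ofReal_mul_I _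

theorem norm_chirp_mul (t x : ℝ) (z : ℂ) : ‖chirp t x * z‖ = ‖z‖ := by
  rw [norm_mul, norm_chirp, one_mul]

theorem chirp_mul_chirp_neg_mul (t x : ℝ) (z : ℂ) : chirp t x * (chirp (-t) x * z) = z := by
  rw [← mul_assoc, chirp, chirp, ← Complex.exp_add, ← add_mul, ← Complex.ofReal_add]
  ring_nf
  simp

theorem continuous_chirp (t : ℝ) : Continuous (chirp t) := by
  unfold chirp; fun_prop

theorem hasDerivAt_chirp (t x : ℝ) :
    HasDerivAt (chirp t) (((x / t : ℝ) : ℂ) * Complex.I * chirp t x) x := by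
  have hphase : HasDerivAt (fun y : ℝ => y ^ 2 / (2 * t)) (x / t) x := by
    refine ((hasDerivAt_pow 2 x).div_const (2 * t)).congr_deriv ?_
    field_simp
    ring
  exact (hphase.ofReal_comp.mul_const Complex.I).cexp.congr_deriv (mul_comm _ _)

theorem Jop_chirp_mul {t x : ℝ} {w : ℝ → ℂ} {w' : ℂ} (ht : t ≠ 0) (hw : HasDerivAt w w' x) :
    Jop t (fun y => chirp t y * w y) x = Complex.I * t * chirp t x * w' := by
  have hd : HasDerivAt (fun y => chirp t y * w y) _ x := (hasDerivAt_chirp t x).mul hw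
  have ht' : (t : ℂ) ≠ 0 := Complex.ofReal_ne_zero.2 ht
  rw [Jop, hd.deriv]
  push_cast
  field_simp
  ring_nf
  rw [Complex.I_sq]
  ring

theorem norm_Jop_chirp_mul {t x : ℝ} {w : ℝ → ℂ} {w' : ℂ} (ht : 0 < t) (hw : HasDerivAt w w' x) :
    ‖Jop t (fun y => chirp t y * w y) x‖ = t * ‖w'‖ := by
  simp [Jop_chirp_mul ht.ne' hw, norm_chirp, abs_of_pos ht]

theorem norm_Jop_of_hasDerivAt_chirp_neg_mul {t x : ℝ} {v : ℝ → ℂ} {w' : ℂ} (ht : 0 < t)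
    (hw : HasDerivAt (fun y => chirp (-t) y * v y) w' x) : ‖Jop t v x‖ = t * ‖w'‖ := by
  simpa only [chirp_mul_chirp_neg_mul] using norm_Jop_chirp_mul ht hw

theorem MeasureTheory.AEStronglyMeasurable.Jop {μ : Measure ℝ} {v : ℝ → ℂ} (t : ℝ)
    (hv : AEStronglyMeasurable v μ) : AEStronglyMeasurable (Jop t v) μ :=
  (Complex.continuous_ofReal.aestronglyMeasurable.mul hv).add
    (aestronglyMeasurable_const.mul (measurable_deriv v).aestronglyMeasurable)

theorem norm_Jop_power_le {p t x : ℝ} {v : ℝ → ℂ} (hp : 1 ≤ p) (ht : 0 < t)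
    (hv : DifferentiableAt ℝ v x) :
    ‖Jop t (fun y => ((‖v y‖ ^ (p - 1) : ℝ) : ℂ) * v y) x‖ ≤ p * ‖v x‖ ^ (p - 1) * ‖Jop t v x‖ := by
  have hw : HasDerivAt (fun y => chirp (-t) y * v y) _ x :=
    (hasDerivAt_chirp (-t) x).mul hv.hasDerivAt
  obtain ⟨D, hD, hD_le⟩ := hw.exists_norm_rpow_smul hp
  have hf_eq : (fun y => ((‖v y‖ ^ (p - 1) : ℝ) : ℂ) * v y) = fun y =>
      chirp t y * (‖chirp (-t) y * v y‖ ^ (p - 1) • (chirp (-t) y * v y)) := funext fun y => by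
    rw [norm_chirp_mul, Complex.real_smul, mul_left_comm, chirp_mul_chirp_neg_mul]
  rw [norm_chirp_mul] at hD_le
  rw [hf_eq, norm_Jop_chirp_mul ht hD, norm_Jop_of_hasDerivAt_chirp_neg_mul ht hw]
  calc t * ‖D‖ ≤ t * (p * ‖v x‖ ^ (p - 1) * ‖_‖) := by gcongr
    _ = _ := by ring

theorem sq_norm_le_L2norm_mul_L2norm_Jop {t x : ℝ} {v : ℝ → ℂ} (ht : 0 < t)
    (hv : ∀ y ∈ Ioi 0, DifferentiableAt ℝ v y) (hv2 : MemLp v 2 (volume.restrict (Ioi 0)))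
    (hJ : MemLp (Jop t v) 2 (volume.restrict (Ioi 0))) (hx : 0 < x) :
    ‖v x‖ ^ 2 ≤ 2 * L2norm v * (t⁻¹ * L2norm (Jop t v)) := by
  set w : ℝ → ℂ := fun y => chirp (-t) y * v y
  have hnorm : ∀ y, ‖w y‖ = ‖v y‖ := fun y => norm_chirp_mul _ _ _
  have hw : ∀ y ∈ Ioi 0, HasDerivAt w (deriv w y) y := fun y hy =>
    ((hasDerivAt_chirp (-t) y).differentiableAt.mul (hv y hy)).hasDerivAt
  have hw' : ∀ y ∈ Ioi 0, ‖deriv w y‖ = t⁻¹ * ‖Jop t v y‖ := fun y hy => by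
    rw [norm_Jop_of_hasDerivAt_chirp_neg_mul ht (hw y hy), inv_mul_cancel_left₀ ht.ne']
  have hw2 : MemLp w 2 (volume.restrict (Ioi 0)) :=
    hv2.congr_norm ((continuous_chirp (-t)).aestronglyMeasurable.mul hv2.1)
      (.of_forall fun y => (hnorm y).symm)
  have hw'2 : MemLp (deriv w) 2 (volume.restrict (Ioi 0)) :=
    (hJ.const_smul t⁻¹).congr_norm (measurable_deriv w).aestronglyMeasurable
      ((ae_restrict_iff' measurableSet_Ioi).2 (.of_forall fun y hy => by
        rw [hw' y hy, Pi.smul_apply, norm_smul, Real.norm_of_nonneg (inv_nonneg.2 ht.le)]))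
  calc ‖v x‖ ^ 2 = ‖w x‖ ^ 2 := by rw [hnorm]
    _ ≤ 2 * L2norm w * L2norm (deriv w) := sq_norm_le_of_hasDerivAt_Ioi hw hw2 hw'2 hx
    _ = 2 * L2norm v * (t⁻¹ * L2norm (Jop t v)) := by
        rw [L2norm_eq_mul_of_norm_eq (inv_nonneg.2 ht.le) hw']
        simp only [L2norm, hnorm]

theorem L2norm_Jop_power_le {p t M : ℝ} {v : ℝ → ℂ} (hp : 1 ≤ p) (ht : 0 < t)
    (hv : ∀ x ∈ Ioi 0, DifferentiableAt ℝ v x)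
    (hJ : IntegrableOn (fun x => ‖Jop t v x‖ ^ 2) (Ioi 0)) (hM : ∀ x ∈ Ioi 0, ‖v x‖ ^ 2 ≤ M) :
    L2norm (Jop t fun y => ((‖v y‖ ^ (p - 1) : ℝ) : ℂ) * v y) ≤
      p * M ^ ((p - 1) / 2) * L2norm (Jop t v) := by
  have hM0 : 0 ≤ M := (sq_nonneg _).trans (hM 1 (mem_Ioi.2 one_pos))
  refine L2norm_le_mul_of_norm_le (by positivity) hJ fun x hx =>
    (norm_Jop_power_le hp ht (hv x hx)).trans ?_
  have hpow : ‖v x‖ ^ (p - 1) ≤ M ^ ((p - 1) / 2) := by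
    rw [show ‖v x‖ ^ (p - 1) = (‖v x‖ ^ 2) ^ ((p - 1) / 2) by
      rw [← Real.rpow_natCast, ← Real.rpow_mul (norm_nonneg _)]; ring_nf]
    exact Real.rpow_le_rpow (by positivity) (hM x hx) (by linarith)
  gcongr

/-- `L²` estimate of `J` applied to the power nonlinearity `f = |v|^(p-1) v`. -/
theorem L2_bound_J_power_nonlinearity (p : ℝ) (hp : 1 ≤ p) :
    ∃ C > (0:ℝ), ∀ t : ℝ, 0 < t → ∀ v : ℝ → ℂ,
      ContDiffOn ℝ 1 v (Set.Ioi 0) →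
      MeasureTheory.IntegrableOn (fun x => ‖v x‖ ^ 2) (Set.Ioi 0) →
      MeasureTheory.IntegrableOn (fun x => ‖deriv v x‖ ^ 2) (Set.Ioi 0) →
      MeasureTheory.IntegrableOn (fun x => ‖Jop t v x‖ ^ 2) (Set.Ioi 0) →
      L2norm (Jop t (fun x => ((‖v x‖ ^ (p - 1) : ℝ) : ℂ) * v x)) ≤
          C * t ^ (-(p - 1)/2) * L2norm v ^ ((p - 1)/2) *
            L2norm (Jop t v) ^ ((p + 1)/2) ∧
      L2norm (Jop t (fun x => ((‖v x‖ ^ (p - 1) : ℝ) : ℂ) * v x)) ≤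
          C * L2norm v ^ ((p - 1)/2) * L2norm (deriv v) ^ ((p - 1)/2) *
            L2norm (Jop t v) := by
  refine ⟨p * 2 ^ ((p - 1) / 2), by positivity, fun t ht v hv hv2 hv'2 hJ2 => ?_⟩
  have hdiff : ∀ x ∈ Ioi 0, DifferentiableAt ℝ v x := fun x hx =>
    (hv.differentiableOn one_ne_zero x hx).differentiableAt (isOpen_Ioi.mem_nhds hx)
  have hvm : AEStronglyMeasurable v (volume.restrict (Ioi 0)) :=
    hv.continuousOn.aestronglyMeasurable measurableSet_Ioi
  have hvL2 := (memLp_two_iff_integrable_sq_norm hvm).2 hv2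
  have hv'L2 := (memLp_two_iff_integrable_sq_norm
    (measurable_deriv v).aestronglyMeasurable).2 hv'2
  have hJL2 := (memLp_two_iff_integrable_sq_norm (hvm.Jop t)).2 hJ2
  have hA := L2norm_nonneg v
  have hB := L2norm_nonneg (Jop t v)
  have hsup_J : ∀ x ∈ Ioi 0, ‖v x‖ ^ 2 ≤ 2 * L2norm v * (t⁻¹ * L2norm (Jop t v)) :=
    fun x hx => sq_norm_le_L2norm_mul_L2norm_Jop ht hdiff hvL2 hJL2 hx
  have hsup_deriv : ∀ x ∈ Ioi 0, ‖v x‖ ^ 2 ≤ 2 * L2norm v * L2norm (deriv v) :=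
    fun x hx => sq_norm_le_of_hasDerivAt_Ioi (fun y hy => (hdiff y hy).hasDerivAt) hvL2 hv'L2 hx
  constructor
  · refine (L2norm_Jop_power_le hp ht hdiff hJ2 hsup_J).trans_eq ?_
    rw [Real.mul_rpow (by positivity) (by positivity), Real.mul_rpow zero_le_two hA,
      Real.mul_rpow (inv_nonneg.2 ht.le) hB, Real.inv_rpow ht.le, ← Real.rpow_neg ht.le,
      show (p + 1) / 2 = (p - 1) / 2 + 1 by ring, Real.rpow_add' hB (by linarith),
      Real.rpow_one, neg_div]
    ring
  · refine (L2norm_Jop_power_le hp ht hdiff hJ2 hsup_deriv).trans_eq ?_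
    rw [Real.mul_rpow (by positivity) (L2norm_nonneg _), Real.mul_rpow zero_le_two hA]
    ring
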